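/- Let 0 < α ≤ 1 and suppose f ∈ C^{1,α}(ℝⁿ) is nonnegative on ℝⁿ. Then the function √f belongs to C^{(1+α)/2}(ℝⁿ); more precisely, for all x, y ∈ ℝⁿ, |√(f(x)) − √(f(y))| ≤ ([∇f]_α/α)^{1/2} · |x − y|^{(1+α)/2}, i.e., [√f]_{(1+α)/2, ℝⁿ} ≤ ([∇f]_α/α)^{1/2}. -/

import Mathlib

/-! Along the segment from `y` to `x`, `φ t = f (y + t • (x - y))` is nonnegative and `φ'` is
`α`-Hölder at `0` with constant `C ‖x - y‖ ^ (1 + α)`, so it suffices to work in one variable.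
There the Taylor bound `φ s ≤ φ 0 + s φ' 0 + C |s| ^ (1 + α) / (1 + α)` at `s = -t`, together with
`φ (-t) ≥ 0`, bounds `φ' 0` from above; inserted in the same bound at `s = 1` this gives
`φ 1 ≤ φ 0 + φ 0 / t + (C / α) t` for every `t ≥ 1`, and optimizing in `t` yields
`φ 1 ≤ (√(φ 0) + √(C / α)) ^ 2`. -/

open Filter Topology

theorem taylor_upper_bound_of_deriv_holderAt_of_le {φ φ' : ℝ → ℝ} {a x C α : ℝ} (hα : 0 ≤ α)
    (hφ : ∀ s, HasDerivAt φ (φ' s) s) (hH : ∀ s, |φ' s - φ' a| ≤ C * |s - a| ^ α)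
    (hax : a ≤ x) :
    φ x ≤ φ a + (x - a) * φ' a + C * (x - a) ^ (1 + α) / (1 + α) := by
  set g : ℝ → ℝ := fun s => φ a + (s - a) * φ' a + C * (s - a) ^ (1 + α) / (1 + α) - φ s
  have hg : ∀ s, HasDerivAt g (φ' a + C * (s - a) ^ α - φ' s) s := by
    intro s
    have hsub := (hasDerivAt_id' s).sub_const a
    have hpow := hsub.rpow_const (p := 1 + α) (Or.inr (by linarith))
    refine ((((hsub.mul_const (φ' a)).const_add (φ a)).add
      ((hpow.const_mul C).div_const (1 + α))).sub (hφ s)).congr_deriv ?_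
    rw [add_sub_cancel_left]
    field_simp
  have hmono : MonotoneOn g (Set.Ici a) := by
    refine monotoneOn_of_hasDerivWithinAt_nonneg (convex_Ici a)
      (fun s _ => (hg s).continuousAt.continuousWithinAt)
      (fun s _ => (hg s).hasDerivWithinAt) fun s hs => ?_
    rw [interior_Ici] at hs
    have hHs := hH s
    rw [abs_of_pos (sub_pos.2 (Set.mem_Ioi.1 hs))] at hHs
    linarith [le_abs_self (φ' s - φ' a)]
  have hgx := hmono Set.self_mem_Ici hax hax
  simp only [g, sub_self, zero_mul, add_zero, Real.zero_rpow (by linarith : 1 + α ≠ 0),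
    mul_zero, zero_div] at hgx
  linarith

theorem taylor_upper_bound_of_deriv_holderAt {φ φ' : ℝ → ℝ} {a C α : ℝ} (hα : 0 ≤ α)
    (hφ : ∀ s, HasDerivAt φ (φ' s) s) (hH : ∀ s, |φ' s - φ' a| ≤ C * |s - a| ^ α) (x : ℝ) :
    φ x ≤ φ a + (x - a) * φ' a + C * |x - a| ^ (1 + α) / (1 + α) := by
  rcases le_total a x with hax | hxa
  · simpa [abs_of_nonneg (sub_nonneg.2 hax)] using
      taylor_upper_bound_of_deriv_holderAt_of_le hα hφ hH hax
  · have hψ : ∀ s, HasDerivAt (fun s => φ (-s)) (-φ' (-s)) s := fun s => by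
      simpa [Function.comp_def] using (hφ (-s)).comp s (hasDerivAt_neg s)
    have hψH : ∀ s, |-φ' (-s) - -φ' (-(-a))| ≤ C * |s - -a| ^ α := fun s =>
      calc |-φ' (-s) - -φ' (-(-a))| = |φ' (-s) - φ' a| := by
            rw [neg_neg, neg_sub_neg, abs_sub_comm]
        _ ≤ C * |-s - a| ^ α := hH (-s)
        _ = C * |s - -a| ^ α := by rw [show -s - a = -(s - -a) by ring, abs_neg]
    have := taylor_upper_bound_of_deriv_holderAt_of_le hα hψ hψH (neg_le_neg hxa)
    simp only [neg_neg, neg_sub_neg] at this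
    rw [abs_of_nonpos (sub_nonpos.2 hxa), neg_sub]
    convert this using 3
    ring

theorem le_add_sq_of_forall_one_le {x a b : ℝ} (ha : 0 ≤ a) (hb : 0 ≤ b)
    (h : ∀ t, 1 ≤ t → x ≤ a ^ 2 + a ^ 2 / t + b ^ 2 * t) : x ≤ (a + b) ^ 2 := by
  rcases le_or_gt a b with hab | hba
  · nlinarith [h 1 le_rfl, mul_le_mul_of_nonneg_left hab ha]
  rcases hb.eq_or_lt with rfl | hb0
  · have hlim : Tendsto (fun t => a ^ 2 + a ^ 2 / t + 0 ^ 2 * t) atTop (𝓝 (a ^ 2)) := by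
      simpa using tendsto_const_nhds.add (tendsto_const_nhds.div_atTop (tendsto_id (α := ℝ)))
    simpa using ge_of_tendsto hlim ((eventually_ge_atTop 1).mono h)
  · have hopt : a ^ 2 + a ^ 2 / (a / b) + b ^ 2 * (a / b) = a ^ 2 + 2 * a * b := by
      field_simp
      ring
    nlinarith [h (a / b) ((one_le_div hb0).2 hba.le)]

theorem sqrt_le_sqrt_add_of_holderAt_zero {φ φ' : ℝ → ℝ} {C α : ℝ} (hα : 0 < α) (hα1 : α ≤ 1)
    (hφ : ∀ s, HasDerivAt φ (φ' s) s) (hφ0 : ∀ s, 0 ≤ φ s)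
    (hH : ∀ s, |φ' s - φ' 0| ≤ C * |s| ^ α) :
    √(φ 1) ≤ √(φ 0) + √(C / α) := by
  have hC : 0 ≤ C := by simpa using (abs_nonneg _).trans (hH 1)
  have hH₀ : ∀ s, |φ' s - φ' 0| ≤ C * |s - 0| ^ α := fun s => by rw [sub_zero]; exact hH s
  have hforward := taylor_upper_bound_of_deriv_holderAt hα.le hφ hH₀ 1
  simp only [sub_zero, abs_one, Real.one_rpow, one_mul, mul_one] at hforward
  have hbound : ∀ t, 1 ≤ t → φ 1 ≤ φ 0 + φ 0 / t + C / α * t := by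
    intro t ht
    have ht0 : 0 < t := by linarith
    have hbackward := (hφ0 (-t)).trans (taylor_upper_bound_of_deriv_holderAt hα.le hφ hH₀ (-t))
    rw [sub_zero, abs_neg, abs_of_pos ht0, Real.rpow_add ht0, Real.rpow_one] at hbackward
    have hderiv : φ' 0 ≤ φ 0 / t + C * t ^ α / (1 + α) := by
      refine le_of_mul_le_mul_right ?_ ht0
      rw [add_mul, div_mul_cancel₀ _ ht0.ne']
      have : C * (t * t ^ α) / (1 + α) = C * t ^ α / (1 + α) * t := by ring
      linarith
    have htα : t ^ α ≤ t := by
      simpa using Real.rpow_le_rpow_of_exponent_le ht hα1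
    calc φ 1 ≤ φ 0 + φ' 0 + C / (1 + α) := hforward
      _ ≤ φ 0 + φ 0 / t + C * (t ^ α + 1) / (1 + α) := by rw [mul_add, mul_one, add_div]; linarith
      _ ≤ φ 0 + φ 0 / t + C / α * t := by
        gcongr
        rw [div_le_iff₀ (by positivity), div_mul_eq_mul_div, div_mul_eq_mul_div,
          le_div_iff₀ hα]
        nlinarith [mul_le_mul_of_nonneg_left htα hC, mul_le_mul_of_nonneg_left ht hC]
  rw [Real.sqrt_le_left (by positivity)]
  refine le_add_sq_of_forall_one_le (Real.sqrt_nonneg _) (Real.sqrt_nonneg _) fun t ht => ?_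
  rw [Real.sq_sqrt (hφ0 0), Real.sq_sqrt (div_nonneg hC hα.le)]
  exact hbound t ht

theorem sqrt_le_sqrt_add_of_holderAt {E : Type*} [NormedAddCommGroup E] [NormedSpace ℝ E]
    {f : E → ℝ} {f' : E → E →L[ℝ] ℝ} {C α : ℝ} {y : E} (hα : 0 < α) (hα1 : α ≤ 1)
    (hf : ∀ z, HasFDerivAt f (f' z) z) (hf0 : ∀ z, 0 ≤ f z)
    (hH : ∀ z, ‖f' z - f' y‖ ≤ C * ‖z - y‖ ^ α) (x : E) :
    √(f x) ≤ √(f y) + √(C / α) * ‖x - y‖ ^ ((1 + α) / 2) := by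
  set v := x - y
  have hline : ∀ t : ℝ, HasDerivAt (fun t : ℝ => y + t • v) v t := fun t => by
    simpa using ((hasDerivAt_id t).smul_const v).const_add y
  have hφ : ∀ t : ℝ, HasDerivAt (fun t : ℝ => f (y + t • v)) (f' (y + t • v) v) t :=
    fun t => (hf _).comp_hasDerivAt t (hline t)
  have hφH : ∀ s : ℝ, |f' (y + s • v) v - f' (y + (0 : ℝ) • v) v|
      ≤ C * ‖v‖ ^ (1 + α) * |s| ^ α := fun s =>
    calc |f' (y + s • v) v - f' (y + (0 : ℝ) • v) v| = ‖(f' (y + s • v) - f' y) v‖ := by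
          simp [Real.norm_eq_abs]
      _ ≤ ‖f' (y + s • v) - f' y‖ * ‖v‖ := (f' (y + s • v) - f' y).le_opNorm v
      _ ≤ C * ‖s • v‖ ^ α * ‖v‖ := by
          gcongr
          simpa using hH (y + s • v)
      _ = C * ‖v‖ ^ (1 + α) * |s| ^ α := by
          rw [norm_smul, Real.norm_eq_abs, Real.mul_rpow (abs_nonneg _) (norm_nonneg _),
            Real.rpow_add' (norm_nonneg _) (by positivity), Real.rpow_one]
          ring
  have := sqrt_le_sqrt_add_of_holderAt_zero hα hα1 hφ (fun t => hf0 _) hφH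
  simp only [one_smul, zero_smul, add_zero, v, add_sub_cancel] at this
  rwa [mul_div_right_comm, Real.sqrt_mul' _ (by positivity), Real.sqrt_eq_rpow (‖x - y‖ ^ _),
    ← Real.rpow_mul (norm_nonneg _), mul_one_div] at this

theorem norm_gradient_sub_gradient {F : Type*} [NormedAddCommGroup F] [InnerProductSpace ℝ F]
    [CompleteSpace F] (f : F → ℝ) (x y : F) :
    ‖gradient f x - gradient f y‖ = ‖fderiv ℝ f x - fderiv ℝ f y‖ := by
  rw [gradient, gradient, ← map_sub, LinearIsometryEquiv.norm_map]

theorem sqrt_half_regular_general (n : ℕ) (α : ℝ) (hα : 0 < α) (hα1 : α ≤ 1)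
    (f : EuclideanSpace ℝ (Fin n) → ℝ)
    (hf0 : ∀ x, 0 ≤ f x)
    (hf : ContDiff ℝ 1 f)
    (C : ℝ)
    (hgrad : ∀ x y, ‖gradient f x - gradient f y‖ ≤ C * ‖x - y‖ ^ α) :
    ∀ x y, |Real.sqrt (f x) - Real.sqrt (f y)| ≤
      Real.sqrt (C / α) * ‖x - y‖ ^ ((1 + α) / 2) := by
  have hfderiv : ∀ z, HasFDerivAt f (fderiv ℝ f z) z := fun z =>
    (hf.differentiable one_ne_zero z).hasFDerivAt
  have hH : ∀ z w, ‖fderiv ℝ f z - fderiv ℝ f w‖ ≤ C * ‖z - w‖ ^ α := fun z w => by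
    simpa only [norm_gradient_sub_gradient] using hgrad z w
  intro x y
  rw [abs_sub_le_iff]
  constructor
  · linarith [sqrt_le_sqrt_add_of_holderAt hα hα1 hfderiv hf0 (fun z => hH z y) x]
  · rw [norm_sub_rev]
    linarith [sqrt_le_sqrt_add_of_holderAt hα hα1 hfderiv hf0 (fun z => hH z x) y]

/-- If `f ∈ C^{1,α}(ℝⁿ)` is nonnegative and `C ≥ 0` is any `α`-Hölder constant for the
gradient `∇f` (in particular the Hölder seminorm `[∇f]_α`), then `√f` is
`(1+α)/2`-Hölder with `[√f]_{(1+α)/2} ≤ (C/α)^{1/2}`: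
`|√(f x) − √(f y)| ≤ √(C/α) · ‖x − y‖^{(1+α)/2}` for all `x, y`. -/
theorem sqrt_half_regular (n : ℕ) (α : ℝ) (hα : 0 < α) (hα1 : α ≤ 1)
    (f : EuclideanSpace ℝ (Fin n) → ℝ)
    (hf0 : ∀ x, 0 ≤ f x)
    (hf : ContDiff ℝ 1 f)
    (C : ℝ) (hC : 0 ≤ C)
    (hgrad : ∀ x y, ‖gradient f x - gradient f y‖ ≤ C * ‖x - y‖ ^ α) :
    ∀ x y, |Real.sqrt (f x) - Real.sqrt (f y)| ≤
      Real.sqrt (C / α) * ‖x - y‖ ^ ((1 + α) / 2) :=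
  sqrt_half_regular_general n α hα hα1 f hf0 hf C hgrad
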